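/- arXiv:2210.13653 — 3 statements merged into one kernel-verified Lean document; each statement's English description precedes it below -/
import Mathlib

section
/- For complex numbers A, a_1, a_2, X with A ≠ 1, a_1 ≠ a_2, and |A a_1 X| < 1, |A a_2 X| < 1, |A^{-1} a_1 X| < 1, |A^{-1} a_2 X| < 1, the series Σ_{k=0}^∞ ((A^{k+1} - A^{-k})/(A-1)) · ((a_1^{k+1} - a_2^{k+1})/(a_1 - a_2)) · X^k converges and equals (1 + (a_1+a_2)X - ((A^2+A+1)/A) a_1 a_2 X^2) / ((1-A a_1 X)(1-A a_2 X)(1-A^{-1} a_1 X)(1-A^{-1} a_2 X)). -/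
/-!
Writing the first factor of the summand as `(A · A^k - (A⁻¹)^k) / (A - 1)` splits the series into
two copies of the generating function `∑ h_k(a₁, a₂) Y^k = 1 / ((1 - a₁ Y)(1 - a₂ Y))` of the complete
homogeneous polynomials `h_k(a₁, a₂) = (a₁^(k+1) - a₂^(k+1)) / (a₁ - a₂)`, taken at `Y = A X` and
`Y = A⁻¹ X`. Combining the two rational functions gives the stated closed form.
-/

theorem hasSum_divided_difference_pow_mul_pow {𝕜 : Type*} [NormedField 𝕜] {u v X : 𝕜}
    (huv : u ≠ v) (hu : ‖u * X‖ < 1) (hv : ‖v * X‖ < 1) :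
    HasSum (fun k : ℕ => (u ^ (k + 1) - v ^ (k + 1)) / (u - v) * X ^ k)
      ((1 - u * X) * (1 - v * X))⁻¹ := by
  have hsum := (((hasSum_geometric_of_norm_lt_one hu).mul_left u).sub
    ((hasSum_geometric_of_norm_lt_one hv).mul_left v)).div_const (u - v)
  rw [← div_eq_mul_inv, ← div_eq_mul_inv,
    div_sub_div _ _ (isUnit_one_sub_of_norm_lt_one hu).ne_zero
      (isUnit_one_sub_of_norm_lt_one hv).ne_zero,
    show u * (1 - v * X) - (1 - u * X) * v = u - v by ring,
    div_div_cancel_left' (sub_ne_zero.mpr huv)] at hsum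
  exact hsum.congr_fun fun k => by ring

theorem mul_inv_sub_inv_div_sub_one_eq {K : Type*} [Field K] {A a₁ a₂ X : K}
    (hA0 : A ≠ 0) (hA : A ≠ 1)
    (hP : (1 - A * a₁ * X) * (1 - A * a₂ * X) ≠ 0)
    (hQ : (1 - A⁻¹ * a₁ * X) * (1 - A⁻¹ * a₂ * X) ≠ 0) :
    (A * ((1 - A * a₁ * X) * (1 - A * a₂ * X))⁻¹
        - ((1 - A⁻¹ * a₁ * X) * (1 - A⁻¹ * a₂ * X))⁻¹) / (A - 1)
      = (1 + (a₁ + a₂) * X - ((A ^ 2 + A + 1) / A) * a₁ * a₂ * X ^ 2)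
        / ((1 - A * a₁ * X) * (1 - A * a₂ * X) * (1 - A⁻¹ * a₁ * X) * (1 - A⁻¹ * a₂ * X)) := by
  have hA1 : A - 1 ≠ 0 := sub_ne_zero.mpr hA
  rw [← div_eq_mul_inv, inv_eq_one_div, div_sub_div _ _ hP hQ, div_div,
    div_eq_div_iff (mul_ne_zero (mul_ne_zero hP hQ) hA1)
      (by simpa only [mul_assoc] using mul_ne_zero hP hQ)]
  field_simp
  ring

theorem first_sum_unramified_general (A a₁ a₂ X : ℂ) (hA0 : A ≠ 0) (hA : A ≠ 1) (ha : a₁ ≠ a₂)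
    (h1 : ‖A * a₁ * X‖ < 1) (h2 : ‖A * a₂ * X‖ < 1)
    (h3 : ‖A⁻¹ * a₁ * X‖ < 1) (h4 : ‖A⁻¹ * a₂ * X‖ < 1) :
    HasSum (fun k : ℕ =>
        ((A ^ (k + 1) - A ^ (-(k : ℤ))) / (A - 1))
          * ((a₁ ^ (k + 1) - a₂ ^ (k + 1)) / (a₁ - a₂)) * X ^ k)
      ((1 + (a₁ + a₂) * X - ((A ^ 2 + A + 1) / A) * a₁ * a₂ * X ^ 2)
        / ((1 - A * a₁ * X) * (1 - A * a₂ * X) * (1 - A⁻¹ * a₁ * X) * (1 - A⁻¹ * a₂ * X))) := by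
  have hAX := hasSum_divided_difference_pow_mul_pow (X := A * X) ha
    (by rwa [mul_left_comm, ← mul_assoc]) (by rwa [mul_left_comm, ← mul_assoc])
  have hAinvX := hasSum_divided_difference_pow_mul_pow (X := A⁻¹ * X) ha
    (by rwa [mul_left_comm, ← mul_assoc]) (by rwa [mul_left_comm, ← mul_assoc])
  rw [mul_left_comm a₁, mul_left_comm a₂, ← mul_assoc, ← mul_assoc] at hAX hAinvX
  have hsum := ((hAX.mul_left A).sub hAinvX).div_const (A - 1)
  rw [mul_inv_sub_inv_div_sub_one_eq hA0 hA
    (mul_ne_zero (isUnit_one_sub_of_norm_lt_one h1).ne_zero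
      (isUnit_one_sub_of_norm_lt_one h2).ne_zero)
    (mul_ne_zero (isUnit_one_sub_of_norm_lt_one h3).ne_zero
      (isUnit_one_sub_of_norm_lt_one h4).ne_zero)] at hsum
  refine hsum.congr_fun fun k => ?_
  rw [zpow_neg, zpow_natCast, mul_pow, mul_pow, inv_pow]
  ring

theorem first_sum_unramified (A a₁ a₂ X : ℂ) (hA0 : A ≠ 0) (ha10 : a₁ ≠ 0) (ha20 : a₂ ≠ 0)
    (hX0 : X ≠ 0) (hA : A ≠ 1) (ha : a₁ ≠ a₂)
    (h1 : ‖A * a₁ * X‖ < 1) (h2 : ‖A * a₂ * X‖ < 1)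
    (h3 : ‖A⁻¹ * a₁ * X‖ < 1) (h4 : ‖A⁻¹ * a₂ * X‖ < 1) :
    HasSum (fun k : ℕ =>
        ((A ^ (k + 1) - A ^ (-(k : ℤ))) / (A - 1))
          * ((a₁ ^ (k + 1) - a₂ ^ (k + 1)) / (a₁ - a₂)) * X ^ k)
      ((1 + (a₁ + a₂) * X - ((A ^ 2 + A + 1) / A) * a₁ * a₂ * X ^ 2)
        / ((1 - A * a₁ * X) * (1 - A * a₂ * X) * (1 - A⁻¹ * a₁ * X) * (1 - A⁻¹ * a₂ * X))) :=
  first_sum_unramified_general A a₁ a₂ X hA0 hA ha h1 h2 h3 h4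
end

section
/- For complex numbers A, a_1, a_2, X with A ≠ 1, a_1 ≠ a_2, and |A a_1 X| < 1, |A a_2 X| < 1, |A^{-1} a_1 X| < 1, |A^{-1} a_2 X| < 1, the series Σ_{k=1}^∞ ((A^{k+1} - A^{-k})/(A-1)) · ((a_1^{k} - a_2^{k})/(a_1 - a_2)) · a_1 a_2 · X^{k+1} converges and equals (((A^2+A+1)/A) a_1 a_2 X^2 - a_1 a_2 (a_1+a_2) X^3 - a_1^2 a_2^2 X^4) / ((1-A a_1 X)(1-A a_2 X)(1-A^{-1} a_1 X)(1-A^{-1} a_2 X)). -/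
/-!
Splitting the quotients `(A ^ (k+2) - A ^ (-(k+1))) / (A - 1)` and
`(a₁ ^ (k+1) - a₂ ^ (k+1)) / (a₁ - a₂)` turns the `k`-th term into a combination of the four
geometric terms `r ^ (k+1)` with `r = A a₁ X, A a₂ X, A⁻¹ a₁ X, A⁻¹ a₂ X`. Summing each geometric series gives four simple
fractions `r / (1 - r)`, and putting them over the common denominator yields the closed form.
-/

lemma hasSum_pow_succ_of_norm_lt_one {K : Type*} [NormedDivisionRing K] {r : K} (hr : ‖r‖ < 1) :
    HasSum (fun k : ℕ => r ^ (k + 1)) (r / (1 - r)) := by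
  simpa only [pow_succ', div_eq_mul_inv] using (hasSum_geometric_of_norm_lt_one hr).mul_left r

section Algebra

variable {K : Type*} [Field K]

lemma second_sum_term_eq (A a₁ a₂ X : K) (k : ℕ) :
    ((A ^ (k + 1 + 1) - A ^ (-((k : ℤ) + 1))) / (A - 1))
        * ((a₁ ^ (k + 1) - a₂ ^ (k + 1)) / (a₁ - a₂)) * (a₁ * a₂) * X ^ (k + 1 + 1)
      = a₁ * a₂ * X / ((A - 1) * (a₁ - a₂))
        * (A * (A * a₁ * X) ^ (k + 1) - A * (A * a₂ * X) ^ (k + 1)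
          - (A⁻¹ * a₁ * X) ^ (k + 1) + (A⁻¹ * a₂ * X) ^ (k + 1)) := by
  have hneg : A ^ (-((k : ℤ) + 1)) = A⁻¹ ^ (k + 1) := by
    rw [← inv_zpow', ← zpow_natCast]
    push_cast
    rfl
  rw [hneg]
  simp only [mul_pow, inv_pow, div_eq_mul_inv, mul_inv]
  ring

lemma second_sum_closed_form {A a₁ a₂ X : K} (hA0 : A ≠ 0) (hA : A ≠ 1) (ha : a₁ ≠ a₂)
    (h1 : 1 - A * a₁ * X ≠ 0) (h2 : 1 - A * a₂ * X ≠ 0)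
    (h3 : 1 - A⁻¹ * a₁ * X ≠ 0) (h4 : 1 - A⁻¹ * a₂ * X ≠ 0) :
    a₁ * a₂ * X / ((A - 1) * (a₁ - a₂))
        * (A * (A * a₁ * X / (1 - A * a₁ * X)) - A * (A * a₂ * X / (1 - A * a₂ * X))
          - A⁻¹ * a₁ * X / (1 - A⁻¹ * a₁ * X) + A⁻¹ * a₂ * X / (1 - A⁻¹ * a₂ * X))
      = (((A ^ 2 + A + 1) / A) * a₁ * a₂ * X ^ 2 - a₁ * a₂ * (a₁ + a₂) * X ^ 3
          - a₁ ^ 2 * a₂ ^ 2 * X ^ 4)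
        / ((1 - A * a₁ * X) * (1 - A * a₂ * X) * (1 - A⁻¹ * a₁ * X) * (1 - A⁻¹ * a₂ * X)) := by
  have hA1 : A - 1 ≠ 0 := sub_ne_zero.mpr hA
  have ha12 : a₁ - a₂ ≠ 0 := sub_ne_zero.mpr ha
  -- the denominators in the shape `field_simp` normalises them to
  have h1' : 1 - a₁ * X * A ≠ 0 := by rwa [mul_comm, ← mul_assoc]
  have h2' : 1 - a₂ * X * A ≠ 0 := by rwa [mul_comm, ← mul_assoc]
  have h3' : A - a₁ * X ≠ 0 := by
    rw [show A - a₁ * X = A * (1 - A⁻¹ * a₁ * X) by field_simp]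
    exact mul_ne_zero hA0 h3
  have h4' : A - a₂ * X ≠ 0 := by
    rw [show A - a₂ * X = A * (1 - A⁻¹ * a₂ * X) by field_simp]
    exact mul_ne_zero hA0 h4
  field_simp
  ring

end Algebra

theorem second_sum_unramified_general (A a₁ a₂ X : ℂ) (hA0 : A ≠ 0) (hA : A ≠ 1)
    (ha : a₁ ≠ a₂) (h1 : ‖A * a₁ * X‖ < 1) (h2 : ‖A * a₂ * X‖ < 1)
    (h3 : ‖A⁻¹ * a₁ * X‖ < 1) (h4 : ‖A⁻¹ * a₂ * X‖ < 1) :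
    HasSum (fun k : ℕ =>
        ((A ^ (k + 1 + 1) - A ^ (-((k : ℤ) + 1))) / (A - 1))
          * ((a₁ ^ (k + 1) - a₂ ^ (k + 1)) / (a₁ - a₂)) * (a₁ * a₂) * X ^ (k + 1 + 1))
      ((((A ^ 2 + A + 1) / A) * a₁ * a₂ * X ^ 2 - a₁ * a₂ * (a₁ + a₂) * X ^ 3
          - a₁ ^ 2 * a₂ ^ 2 * X ^ 4)
        / ((1 - A * a₁ * X) * (1 - A * a₂ * X) * (1 - A⁻¹ * a₁ * X) * (1 - A⁻¹ * a₂ * X))) := by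
  have hsum := (((((hasSum_pow_succ_of_norm_lt_one h1).mul_left A).sub
      ((hasSum_pow_succ_of_norm_lt_one h2).mul_left A)).sub
      (hasSum_pow_succ_of_norm_lt_one h3)).add
      (hasSum_pow_succ_of_norm_lt_one h4)).mul_left (a₁ * a₂ * X / ((A - 1) * (a₁ - a₂)))
  rw [second_sum_closed_form hA0 hA ha (isUnit_one_sub_of_norm_lt_one h1).ne_zero
    (isUnit_one_sub_of_norm_lt_one h2).ne_zero (isUnit_one_sub_of_norm_lt_one h3).ne_zero
    (isUnit_one_sub_of_norm_lt_one h4).ne_zero] at hsum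
  simpa only [second_sum_term_eq] using hsum

theorem second_sum_unramified (A a₁ a₂ X : ℂ) (hA0 : A ≠ 0) (ha10 : a₁ ≠ 0) (ha20 : a₂ ≠ 0)
    (hX0 : X ≠ 0) (hA : A ≠ 1) (ha : a₁ ≠ a₂)
    (h1 : ‖A * a₁ * X‖ < 1) (h2 : ‖A * a₂ * X‖ < 1)
    (h3 : ‖A⁻¹ * a₁ * X‖ < 1) (h4 : ‖A⁻¹ * a₂ * X‖ < 1) :
    HasSum (fun k : ℕ =>
        ((A ^ (k + 1 + 1) - A ^ (-((k : ℤ) + 1))) / (A - 1))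
          * ((a₁ ^ (k + 1) - a₂ ^ (k + 1)) / (a₁ - a₂)) * (a₁ * a₂) * X ^ (k + 1 + 1))
      ((((A ^ 2 + A + 1) / A) * a₁ * a₂ * X ^ 2 - a₁ * a₂ * (a₁ + a₂) * X ^ 3
          - a₁ ^ 2 * a₂ ^ 2 * X ^ 4)
        / ((1 - A * a₁ * X) * (1 - A * a₂ * X) * (1 - A⁻¹ * a₁ * X) * (1 - A⁻¹ * a₂ * X))) :=
  second_sum_unramified_general A a₁ a₂ X hA0 hA ha h1 h2 h3 h4
end

section
/- Let B, a_1, a_2, X be complex numbers with B ≠ 1, a_1 ≠ a_2, and all of |B a_i X|, |B^{-1} a_i X| < 1 (i=1,2). Set W_π(k) = (B^{k+1}−B^{-k})/(B−1), W_τ(k) = (a_1^{k+1}−a_2^{k+1})/(a_1−a_2), J(k) = W_τ(k) + a_1 a_2 X · W_τ(k−1) for k ≥ 1 and J(0) = W_τ(0) = 1. Then Σ_{k=0}^∞ W_π(k) J(k) X^k = ((1−a_1 a_2 X²)(1+a_1 X)(1+a_2 X)) / ((1−B a_1 X)(1−B a_2 X)(1−B^{-1} a_1 X)(1−B^{-1}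 a_2 X)). -/
/-!
Both Whittaker values are sums of two exponentials in `k`: `W_π(k)` in `B` and `B⁻¹`, and
`J(k) X^k` in `a₁ X` and `a₂ X`. Hence each term of the series is a combination of four
geometric progressions with ratios `B^{±1} a_i X`, the series sums to the corresponding four
partial fractions, and putting these over a common denominator gives the stated quotient.
-/

open Finset

theorem hasSum_sum_mul_sum_geometric {K ι κ : Type*} [NormedField K] [Fintype ι] [Fintype κ]
    (p x : ι → K) (q y : κ → K) (hxy : ∀ i j, ‖x i * y j‖ < 1) :
    HasSum (fun k : ℕ => (∑ i, p i * x i ^ k) * ∑ j, q j * y j ^ k)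
      (∑ i, ∑ j, p i * q j / (1 - x i * y j)) := by
  have hexpand (k : ℕ) : (∑ i, p i * x i ^ k) * ∑ j, q j * y j ^ k =
      ∑ i, ∑ j, p i * q j * (x i * y j) ^ k := by
    simp only [sum_mul_sum, mul_pow, mul_mul_mul_comm]
  simp only [hexpand, div_eq_mul_inv]
  exact hasSum_sum fun i _ => hasSum_sum fun j _ =>
    (hasSum_geometric_of_norm_lt_one (hxy i j)).mul_left _

theorem closed_form_of_whittaker_add_shift {K : Type*} [Field K] {a₁ a₂ X : K} (ha : a₁ ≠ a₂)
    {Wτ J : ℕ → K} (hWτ : ∀ k, Wτ k = (a₁ ^ (k + 1) - a₂ ^ (k + 1)) / (a₁ - a₂))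
    (hJ0 : J 0 = Wτ 0) (hJ : ∀ k : ℕ, 1 ≤ k → J k = Wτ k + a₁ * a₂ * X * Wτ (k - 1))
    (k : ℕ) :
    J k = (a₁ ^ (k + 1) * (1 + a₂ * X) - a₂ ^ (k + 1) * (1 + a₁ * X)) / (a₁ - a₂) := by
  have hne : a₁ - a₂ ≠ 0 := sub_ne_zero.mpr ha
  rcases k with _ | k
  · rw [hJ0, hWτ]
    field_simp
    ring
  · rw [hJ (k + 1) k.succ_pos, hWτ, Nat.add_sub_cancel, hWτ]
    field_simp
    ring

theorem unramified_partial_fraction_sum {K : Type*} [Field K] {B a₁ a₂ X : K}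
    (hB0 : B ≠ 0) (hB1 : B ≠ 1) (ha : a₁ ≠ a₂)
    (h1 : 1 - B * a₁ * X ≠ 0) (h2 : 1 - B * a₂ * X ≠ 0)
    (h3 : 1 - B⁻¹ * a₁ * X ≠ 0) (h4 : 1 - B⁻¹ * a₂ * X ≠ 0) :
    B / (B - 1) * (a₁ * (1 + a₂ * X) / (a₁ - a₂)) / (1 - B * (a₁ * X))
      + B / (B - 1) * (-(a₂ * (1 + a₁ * X)) / (a₁ - a₂)) / (1 - B * (a₂ * X))
      + (-1 / (B - 1) * (a₁ * (1 + a₂ * X) / (a₁ - a₂)) / (1 - B⁻¹ * (a₁ * X))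
        + -1 / (B - 1) * (-(a₂ * (1 + a₁ * X)) / (a₁ - a₂)) / (1 - B⁻¹ * (a₂ * X)))
    = (1 - a₁ * a₂ * X ^ 2) * (1 + a₁ * X) * (1 + a₂ * X)
        / ((1 - B * a₁ * X) * (1 - B * a₂ * X) * (1 - B⁻¹ * a₁ * X) * (1 - B⁻¹ * a₂ * X)) := by
  have hB : B - 1 ≠ 0 := sub_ne_zero.mpr hB1
  have ha' : a₁ - a₂ ≠ 0 := sub_ne_zero.mpr ha
  have h3' : B - a₁ * X ≠ 0 := fun h => h3 (by field_simp; linear_combination h)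
  have h4' : B - a₂ * X ≠ 0 := fun h => h4 (by field_simp; linear_combination h)
  simp only [← mul_assoc]
  field_simp
  ring

theorem unramified_computation_full_general (B a₁ a₂ X : ℂ) (hB0 : B ≠ 0) (hB1 : B ≠ 1) (ha : a₁ ≠ a₂)
    (h1 : ‖B * a₁ * X‖ < 1) (h2 : ‖B * a₂ * X‖ < 1)
    (h3 : ‖B⁻¹ * a₁ * X‖ < 1) (h4 : ‖B⁻¹ * a₂ * X‖ < 1)
    (Wπ Wτ J : ℕ → ℂ)
    (hWπ : ∀ k, Wπ k = (B ^ (k + 1) - B ^ (-(k : ℤ))) / (B - 1))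
    (hWτ : ∀ k, Wτ k = (a₁ ^ (k + 1) - a₂ ^ (k + 1)) / (a₁ - a₂))
    (hJ0 : J 0 = Wτ 0)
    (hJ : ∀ k : ℕ, 1 ≤ k → J k = Wτ k + a₁ * a₂ * X * Wτ (k - 1)) :
    HasSum (fun k : ℕ => Wπ k * J k * X ^ k)
      ((1 - a₁ * a₂ * X ^ 2) * (1 + a₁ * X) * (1 + a₂ * X)
        / ((1 - B * a₁ * X) * (1 - B * a₂ * X) * (1 - B⁻¹ * a₁ * X) * (1 - B⁻¹ * a₂ * X))) := by
  have hsum := hasSum_sum_mul_sum_geometric ![B / (B - 1), -1 / (B - 1)] ![B, B⁻¹]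
    ![a₁ * (1 + a₂ * X) / (a₁ - a₂), -(a₂ * (1 + a₁ * X)) / (a₁ - a₂)] ![a₁ * X, a₂ * X] (by
      simp only [Fin.forall_fin_two, Matrix.cons_val_zero, Matrix.cons_val_one, ← mul_assoc]
      exact ⟨⟨h1, h2⟩, h3, h4⟩)
  simp only [Fin.sum_univ_two, Matrix.cons_val_zero, Matrix.cons_val_one] at hsum
  rw [unramified_partial_fraction_sum hB0 hB1 ha
    (isUnit_one_sub_of_norm_lt_one h1).ne_zero (isUnit_one_sub_of_norm_lt_one h2).ne_zero
    (isUnit_one_sub_of_norm_lt_one h3).ne_zero (isUnit_one_sub_of_norm_lt_one h4).ne_zero] at hsum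
  refine hsum.congr_fun fun k => ?_
  have hB : B - 1 ≠ 0 := sub_ne_zero.mpr hB1
  rw [hWπ, closed_form_of_whittaker_add_shift ha hWτ hJ0 hJ, zpow_neg, zpow_natCast, ← inv_pow]
  field_simp
  ring

theorem unramified_computation_full (B a₁ a₂ X : ℂ) (hB0 : B ≠ 0) (ha10 : a₁ ≠ 0)
    (ha20 : a₂ ≠ 0) (hB1 : B ≠ 1) (ha : a₁ ≠ a₂)
    (h1 : ‖B * a₁ * X‖ < 1) (h2 : ‖B * a₂ * X‖ < 1)
    (h3 : ‖B⁻¹ * a₁ * X‖ < 1) (h4 : ‖B⁻¹ * a₂ * X‖ < 1)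
    (Wπ Wτ J : ℕ → ℂ)
    (hWπ : ∀ k, Wπ k = (B ^ (k + 1) - B ^ (-(k : ℤ))) / (B - 1))
    (hWτ : ∀ k, Wτ k = (a₁ ^ (k + 1) - a₂ ^ (k + 1)) / (a₁ - a₂))
    (hJ0 : J 0 = Wτ 0)
    (hJ : ∀ k : ℕ, 1 ≤ k → J k = Wτ k + a₁ * a₂ * X * Wτ (k - 1)) :
    HasSum (fun k : ℕ => Wπ k * J k * X ^ k)
      ((1 - a₁ * a₂ * X ^ 2) * (1 + a₁ * X) * (1 + a₂ * X)
        / ((1 - B * a₁ * X) * (1 - B * a₂ * X) * (1 - B⁻¹ * a₁ * X) * (1 - B⁻¹ * a₂ * X))) :=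
  unramified_computation_full_general B a₁ a₂ X hB0 hB1 ha h1 h2 h3 h4 Wπ Wτ J hWπ hWτ hJ0 hJ
end
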